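/- arXiv:1408.5915 — 5 statements merged into one kernel-verified Lean document; each statement's English description precedes it below -/
import Mathlib

section
/- Let d ≥ 2 and let f : N^d → R be a function such that for every collection of finite sets S_0, ..., S_{d-1} of distinct flats in R^d, where S_i consists of i-flats for i = 0, ..., d-1, one has I(S_0, ..., S_{d-1}) ≤ f(|S_0|, ..., |S_{d-1}|). Then for all integers m ≥ 0 and 0 ≤ j ≤ m, and for every collection of finite sets S_j, ..., S_{j+d-1} of distinct flats in R^{d+m}, where S_i consists of i-flats for i = j, ..., j+d-1, one has I(S_j, ..., S_{j+d-1}) ≤ f(|S_j|, ..., |S_{j+d-1}|). -/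
open scoped Classical
noncomputable section

/-- An `i`-flat in `ℝ^n`: a nonempty affine subspace of dimension `i`. -/
def IsFlat (n i : ℕ) (f : AffineSubspace ℝ (Fin n → ℝ)) : Prop :=
  (f : Set (Fin n → ℝ)).Nonempty ∧ Module.finrank ℝ f.direction = i

/-- The number of tuples `(f_0, …, f_{d-1})` of flats in `ℝ^n` with `f_t ∈ S t` for each `t`
and `f_t ⊆ f_{t+1}` for `t = 0, …, d-2`. -/
def flagCount (n d : ℕ) (S : Fin d → Finset (AffineSubspace ℝ (Fin n → ℝ))) : ℕ :=
  Set.ncard {f : Fin d → AffineSubspace ℝ (Fin n → ℝ) |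
    (∀ t, f t ∈ S t) ∧ ∀ t : Fin d, ∀ h : (t : ℕ) + 1 < d, f t ≤ f ⟨(t : ℕ) + 1, h⟩}

/-!
Cutting with a generic affine hyperplane lowers the dimension of every flat by one, and projecting
`ℝ^(n+1) → ℝ^n` along a generic direction keeps the dimension of every flat of dimension `< n`.
Both operations preserve inclusions and keep distinct flats of equal dimension distinct, so they
do not change the level sizes and can only increase the number of flags. Starting from flats of
dimensions `j, …, j+d-1` in `ℝ^(d+m)`, `j` hyperplane sections and then `m` projections give
complete flags in `ℝ^d`. Genericity is available because each bad choice lies in one of finitely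
many proper subspaces of a parameter space, and a vector space over an infinite field is not a
finite union of proper subspaces.
-/

open Module

theorem Subspace.exists_forall_notMem_of_ne_top {k E : Type*} [DivisionRing k] [Infinite k]
    [AddCommGroup E] [Module k E] (s : Finset (Subspace k E)) :
    ∃ x : E, ∀ p ∈ s, p ≠ ⊤ → x ∉ p := by
  have hcover := Subspace.biUnion_ne_univ_of_top_notMem (s := s.filter (· ≠ ⊤)) (by simp)
  obtain ⟨x, hx⟩ := (Set.ne_univ_iff_exists_notMem _).mp hcover
  refine ⟨x, fun p hp hne hxp => hx ?_⟩
  exact Set.mem_biUnion (Finset.mem_filter.mpr ⟨hp, hne⟩) hxp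

namespace AffineSubspace

variable {k V W : Type*} [Field k] [AddCommGroup V] [Module k V] [AddCommGroup W] [Module k W]

theorem eq_of_le_of_finrank_direction_le [FiniteDimensional k V] {F G : AffineSubspace k V}
    (hle : F ≤ G) (hF : (F : Set V).Nonempty)
    (hrank : finrank k G.direction ≤ finrank k F.direction) : F = G :=
  eq_of_direction_eq_of_nonempty_of_le
    (Submodule.eq_of_le_of_finrank_le (direction_le hle) hrank) hF hle

theorem finrank_direction_map_of_disjoint (F : AffineSubspace k V) (f : V →ₗ[k] W)
    (hf : Disjoint F.direction (LinearMap.ker f)) :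
    finrank k (F.map f.toAffineMap).direction = finrank k F.direction := by
  rw [map_direction, LinearMap.toAffineMap_linear, ← LinearMap.range_domRestrict]
  exact LinearMap.finrank_range_of_inj (LinearMap.injective_domRestrict_iff.mpr hf)

/-- A hyperplane when `L ≠ 0`; when `L = 0` it is empty or the whole space. -/
def levelSet (L : Module.Dual k V) (c : k) : AffineSubspace k V where
  carrier := {x | L x = c}
  smul_vsub_vadd_mem' a x y z hx hy hz := by
    simp only [Set.mem_ofPred_eq, vsub_eq_sub, vadd_eq_add, map_add, map_smul, map_sub] at *
    rw [hx, hy, hz, sub_self, smul_zero, zero_add]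

@[simp]
theorem mem_levelSet {L : Module.Dual k V} {c : k} {x : V} : x ∈ levelSet L c ↔ L x = c :=
  Iff.rfl

theorem levelSet_eq_mk' {L : Module.Dual k V} {c : k} {x : V} (hx : L x = c) :
    levelSet L c = mk' x (LinearMap.ker L) := by
  ext y
  rw [mem_levelSet, mem_mk', vsub_eq_sub, LinearMap.mem_ker, map_sub, hx, sub_eq_zero]

theorem inf_levelSet_nonempty {F : AffineSubspace k V} (hF : (F : Set V).Nonempty)
    {L : Module.Dual k V} (hL : L ∉ F.direction.dualAnnihilator) (c : k) :
    ((F ⊓ levelSet L c : AffineSubspace k V) : Set V).Nonempty := by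
  obtain ⟨p, hp⟩ := hF
  obtain ⟨v, hv, hLv⟩ : ∃ v ∈ F.direction, L v ≠ 0 := by
    simpa [Submodule.mem_dualAnnihilator] using hL
  refine ⟨((c - L p) / L v) • v +ᵥ p, vadd_mem_of_mem_direction (Submodule.smul_mem _ _ hv) hp, ?_⟩
  rw [SetLike.mem_coe, mem_levelSet, vadd_eq_add, map_add, map_smul, smul_eq_mul,
    div_mul_cancel₀ _ hLv]
  ring

theorem finrank_direction_inf_levelSet_add_one [FiniteDimensional k V]
    {F : AffineSubspace k V} (hF : (F : Set V).Nonempty)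
    {L : Module.Dual k V} (hL : L ∉ F.direction.dualAnnihilator) (c : k) :
    finrank k (F ⊓ levelSet L c).direction + 1 = finrank k F.direction := by
  obtain ⟨x, hxF, hxH⟩ := inf_levelSet_nonempty hF hL c
  rw [direction_inf_of_mem hxF hxH, levelSet_eq_mk' hxH, direction_mk']
  let L' : Module.Dual k F.direction := L.domRestrict F.direction
  have hL' : L' ≠ 0 := fun h => hL <| (Submodule.mem_dualAnnihilator L).mpr fun v hv =>
    LinearMap.congr_fun h ⟨v, hv⟩
  rw [← L'.finrank_ker_add_one_of_ne_zero hL', LinearMap.ker_domRestrict,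
    ← Submodule.finrank_map_subtype_eq, Submodule.map_comap_subtype]

theorem eq_of_inf_levelSet_eq [FiniteDimensional k V] {F₁ F₂ : AffineSubspace k V}
    (hF₁ : (F₁ : Set V).Nonempty) (hrank : finrank k F₁.direction = finrank k F₂.direction)
    {L : Module.Dual k V} {c : k} (hL : L ∉ F₁.direction.dualAnnihilator)
    (hgen : ¬F₁ ⊓ F₂ ≤ levelSet L c) (heq : F₁ ⊓ levelSet L c = F₂ ⊓ levelSet L c) :
    F₁ = F₂ := by
  have hsection := finrank_direction_inf_levelSet_add_one hF₁ hL c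
  set H := levelSet L c
  have hle : F₁ ⊓ H ≤ F₁ ⊓ F₂ := le_inf inf_le_left (heq ▸ inf_le_left)
  have hlt : F₁ ⊓ H < F₁ ⊓ F₂ := lt_of_le_not_ge hle fun h => hgen (h.trans inf_le_right)
  have hrank_lt := Submodule.finrank_lt_finrank_of_lt
    (direction_lt_of_nonempty hlt (inf_levelSet_nonempty hF₁ hL c))
  have hF₁₂ : F₁ ⊓ F₂ = F₁ :=
    eq_of_le_of_finrank_direction_le inf_le_left ((inf_levelSet_nonempty hF₁ hL c).mono hle)
      (by omega)
  exact eq_of_le_of_finrank_direction_le (hF₁₂ ▸ inf_le_right) hF₁ hrank.ge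

def containingLevelSets (G : AffineSubspace k V) : Submodule k (Module.Dual k V × k) where
  carrier := {Lc | G ≤ levelSet Lc.1 Lc.2}
  add_mem' h₁ h₂ x hx := by simp [mem_levelSet.mp (h₁ hx), mem_levelSet.mp (h₂ hx)]
  zero_mem' x _ := by simp
  smul_mem' a _ h x hx := by simp [mem_levelSet.mp (h hx)]

theorem mem_containingLevelSets {G : AffineSubspace k V} {Lc : Module.Dual k V × k} :
    Lc ∈ containingLevelSets G ↔ G ≤ levelSet Lc.1 Lc.2 :=
  Iff.rfl

theorem containingLevelSets_ne_top {G : AffineSubspace k V} (hG : (G : Set V).Nonempty) :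
    containingLevelSets G ≠ ⊤ := fun h => by
  obtain ⟨x, hx⟩ := hG
  have h01 : ((0 : Module.Dual k V), (1 : k)) ∈ containingLevelSets G := h ▸ Submodule.mem_top
  simpa using mem_containingLevelSets.mp h01 hx

theorem exists_generic_levelSet [Infinite k] [FiniteDimensional k V]
    (𝒮 : Finset (AffineSubspace k V)) (hne : ∀ F ∈ 𝒮, (F : Set V).Nonempty)
    (hdir : ∀ F ∈ 𝒮, F.direction ≠ ⊥) :
    ∃ H : AffineSubspace k V,
      (∀ F ∈ 𝒮, ((F ⊓ H : AffineSubspace k V) : Set V).Nonempty ∧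
        finrank k (F ⊓ H).direction + 1 = finrank k F.direction) ∧
      ∀ F₁ ∈ 𝒮, ∀ F₂ ∈ 𝒮, finrank k F₁.direction = finrank k F₂.direction →
        F₁ ⊓ H = F₂ ⊓ H → F₁ = F₂ := by
  obtain ⟨⟨L, c⟩, hLc⟩ := Subspace.exists_forall_notMem_of_ne_top
    (𝒮.image (fun F => F.direction.dualAnnihilator.comap (LinearMap.fst k _ k)) ∪
      Finset.image₂ (fun F₁ F₂ => containingLevelSets (F₁ ⊓ F₂)) 𝒮 𝒮)
  have hL : ∀ F ∈ 𝒮, L ∉ F.direction.dualAnnihilator := fun F hF =>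
    hLc _ (Finset.mem_union_left _ (Finset.mem_image_of_mem _ hF))
      (by simpa [Submodule.prod_eq_top_iff] using hdir F hF)
  refine ⟨levelSet L c, fun F hF => ⟨inf_levelSet_nonempty (hne F hF) (hL F hF) c,
    finrank_direction_inf_levelSet_add_one (hne F hF) (hL F hF) c⟩,
    fun F₁ h₁ F₂ h₂ hrank heq => eq_of_inf_levelSet_eq (hne F₁ h₁) hrank (hL F₁ h₁) ?_ heq⟩
  have hF₁₂ : ((F₁ ⊓ F₂ : AffineSubspace k V) : Set V).Nonempty :=
    (inf_levelSet_nonempty (hne F₁ h₁) (hL F₁ h₁) c).mono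
      (le_inf inf_le_left (heq ▸ inf_le_left : F₁ ⊓ levelSet L c ≤ F₂))
  exact hLc _ (Finset.mem_union_right _ (Finset.mem_image₂_of_mem h₁ h₂))
    (containingLevelSets_ne_top hF₁₂)

theorem direction_sup_le_of_map_eq (f : V →ₗ[k] W) {F₁ F₂ : AffineSubspace k V}
    (hF₁ : (F₁ : Set V).Nonempty) (hF₂ : (F₂ : Set V).Nonempty)
    (heq : F₁.map f.toAffineMap = F₂.map f.toAffineMap) :
    (F₁ ⊔ F₂).direction ≤ F₁.direction ⊔ LinearMap.ker f := by
  obtain ⟨p₁, hp₁⟩ := hF₁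
  obtain ⟨p₂, hp₂⟩ := hF₂
  have hdir : F₁.direction.map f = F₂.direction.map f := by
    simpa using congrArg direction heq
  rw [direction_sup hp₁ hp₂, ← Submodule.comap_map_eq]
  refine sup_le (sup_le (Submodule.le_comap_map _ _) (hdir ▸ Submodule.le_comap_map _ _)) ?_
  rw [Submodule.span_singleton_le_iff_mem, Submodule.mem_comap]
  have hfp₂ : f p₂ ∈ F₁.map f.toAffineMap := heq ▸ mem_map_of_mem _ hp₂
  simpa using vsub_mem_direction hfp₂ (mem_map_of_mem f.toAffineMap hp₁)

theorem eq_of_direction_sup_le_sup_span [FiniteDimensional k V] {F₁ F₂ : AffineSubspace k V}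
    (hF₁ : (F₁ : Set V).Nonempty) (hF₂ : (F₂ : Set V).Nonempty)
    (hrank : finrank k F₁.direction = finrank k F₂.direction) {v : V}
    (hv : v ∉ (F₁ ⊔ F₂).direction) (hle : (F₁ ⊔ F₂).direction ≤ F₁.direction ⊔ k ∙ v) :
    F₁ = F₂ := by
  have hdir : (F₁ ⊔ F₂).direction = F₁.direction := by
    refine le_antisymm (le_of_eq ?_) (direction_le le_sup_left)
    calc (F₁ ⊔ F₂).direction = (F₁.direction ⊔ k ∙ v) ⊓ (F₁ ⊔ F₂).direction :=
          (inf_eq_right.mpr hle).symm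
      _ = F₁.direction ⊔ (k ∙ v) ⊓ (F₁ ⊔ F₂).direction :=
          sup_inf_assoc_of_le _ (direction_le le_sup_left)
      _ = F₁.direction := by
          rw [(Submodule.disjoint_span_singleton_of_notMem hv).symm.eq_bot, sup_bot_eq]
  have hsup : F₁ = F₁ ⊔ F₂ := eq_of_direction_eq_of_nonempty_of_le hdir.symm hF₁ le_sup_left
  exact (eq_of_le_of_finrank_direction_le (hsup ▸ le_sup_right) hF₂ hrank.le).symm

theorem exists_generic_projection [Infinite k] [FiniteDimensional k V] [FiniteDimensional k W]
    (hW : finrank k W + 1 = finrank k V) (𝒮 : Finset (AffineSubspace k V))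
    (hne : ∀ F ∈ 𝒮, (F : Set V).Nonempty)
    (hrank : ∀ F ∈ 𝒮, finrank k F.direction + 1 < finrank k V) :
    ∃ π : V →ₗ[k] W,
      (∀ F ∈ 𝒮, finrank k (F.map π.toAffineMap).direction = finrank k F.direction) ∧
      ∀ F₁ ∈ 𝒮, ∀ F₂ ∈ 𝒮, finrank k F₁.direction = finrank k F₂.direction →
        F₁.map π.toAffineMap = F₂.map π.toAffineMap → F₁ = F₂ := by
  have ne_top : ∀ D : Submodule k V, finrank k D < finrank k V → D ≠ ⊤ := fun D hD h => by
    rw [h, finrank_top] at hD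
    exact hD.false
  obtain ⟨v, hv⟩ := Subspace.exists_forall_notMem_of_ne_top
    (insert ⊥ (Finset.image₂ (fun F₁ F₂ => (F₁ ⊔ F₂).direction) 𝒮 𝒮))
  have hv₀ : v ≠ 0 := fun h =>
    hv ⊥ (Finset.mem_insert_self _ _) (ne_top ⊥ (by rw [finrank_bot]; omega)) (h ▸ zero_mem _)
  have hvsup : ∀ F₁ ∈ 𝒮, ∀ F₂ ∈ 𝒮, finrank k (F₁ ⊔ F₂).direction < finrank k V →
      v ∉ (F₁ ⊔ F₂).direction := fun F₁ h₁ F₂ h₂ hlt =>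
    hv _ (Finset.mem_insert_of_mem (Finset.mem_image₂_of_mem h₁ h₂)) (ne_top _ hlt)
  have hvF : ∀ F ∈ 𝒮, v ∉ F.direction := fun F hF => by
    have hlt : finrank k (F ⊔ F).direction < finrank k V := by
      rw [sup_idem]; have := hrank F hF; omega
    simpa using hvsup F hF F hF hlt
  have hquot : finrank k (V ⧸ k ∙ v) = finrank k W := by
    have := (k ∙ v).finrank_quotient_add_finrank
    rw [finrank_span_singleton hv₀] at this
    omega
  let π : V →ₗ[k] W := (LinearEquiv.ofFinrankEq _ _ hquot).toLinearMap ∘ₗ (k ∙ v).mkQ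
  have hker : LinearMap.ker π = k ∙ v := by
    rw [LinearEquiv.ker_comp, Submodule.ker_mkQ]
  refine ⟨π, fun F hF => finrank_direction_map_of_disjoint F π
    (hker ▸ Submodule.disjoint_span_singleton_of_notMem (hvF F hF)),
    fun F₁ h₁ F₂ h₂ hrank₁₂ heq => ?_⟩
  have hle := hker ▸ direction_sup_le_of_map_eq π (hne F₁ h₁) (hne F₂ h₂) heq
  refine eq_of_direction_sup_le_sup_span (hne F₁ h₁) (hne F₂ h₂) hrank₁₂
    (hvsup F₁ h₁ F₂ h₂ ?_) hle
  calc finrank k (F₁ ⊔ F₂).direction ≤ finrank k (F₁.direction ⊔ k ∙ v : Submodule k V) :=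
        Submodule.finrank_mono hle
    _ ≤ finrank k F₁.direction + finrank k (k ∙ v) :=
        Submodule.finrank_add_le_finrank_add_finrank _ _
    _ < finrank k V := by rw [finrank_span_singleton hv₀]; exact hrank F₁ h₁

end AffineSubspace

open AffineSubspace

theorem flagCount_le_flagCount_image {n n' d : ℕ}
    (S : Fin d → Finset (AffineSubspace ℝ (Fin n → ℝ)))
    {φ : AffineSubspace ℝ (Fin n → ℝ) → AffineSubspace ℝ (Fin n' → ℝ)} (hφ : Monotone φ)
    (hinj : ∀ t, Set.InjOn φ (S t)) :
    flagCount n d S ≤ flagCount n' d fun t => (S t).image φ := by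
  refine Set.ncard_le_ncard_of_injOn (fun g => φ ∘ g) ?_ ?_ ?_
  · rintro g ⟨hgS, hg⟩
    exact ⟨fun t => Finset.mem_image_of_mem φ (hgS t), fun t h => hφ (hg t h)⟩
  · rintro g ⟨hgS, -⟩ g' ⟨hgS', -⟩ hgg
    exact funext fun t => hinj t (hgS t) (hgS' t) (congrFun hgg t)
  · exact (Set.Finite.pi' fun t => ((S t).image φ).finite_toSet).subset fun g hg t => hg.1 t

def BoundsFlagCount (d : ℕ) (f : (Fin d → ℕ) → ℝ) (n k : ℕ) : Prop :=
  ∀ S : Fin d → Finset (AffineSubspace ℝ (Fin n → ℝ)),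
    (∀ t : Fin d, ∀ g ∈ S t, IsFlat n (k + t) g) → (flagCount n d S : ℝ) ≤ f fun t => (S t).card

namespace BoundsFlagCount

variable {d : ℕ} {f : (Fin d → ℕ) → ℝ} {n k : ℕ}

theorem of_exists_map {n' k' : ℕ} (h : BoundsFlagCount d f n k)
    (hφ : ∀ S : Fin d → Finset (AffineSubspace ℝ (Fin n' → ℝ)),
      (∀ t : Fin d, ∀ g ∈ S t, IsFlat n' (k' + t) g) →
      ∃ φ : AffineSubspace ℝ (Fin n' → ℝ) → AffineSubspace ℝ (Fin n → ℝ), Monotone φ ∧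
        (∀ t : Fin d, ∀ g ∈ S t, IsFlat n (k + t) (φ g)) ∧ ∀ t, Set.InjOn φ (S t)) :
    BoundsFlagCount d f n' k' := by
  intro S hS
  obtain ⟨φ, hmono, hflat, hinj⟩ := hφ S hS
  have hcard : (fun t => ((S t).image φ).card) = fun t => (S t).card :=
    funext fun t => Finset.card_image_of_injOn (hinj t)
  calc (flagCount n' d S : ℝ) ≤ flagCount n d fun t => (S t).image φ := by
        exact_mod_cast flagCount_le_flagCount_image S hmono hinj
    _ ≤ f fun t => ((S t).image φ).card := h _ fun t => Finset.forall_mem_image.mpr (hflat t)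
    _ = f fun t => (S t).card := by rw [hcard]

theorem succ_flatDim (h : BoundsFlagCount d f n k) : BoundsFlagCount d f n (k + 1) := by
  refine h.of_exists_map fun S hS => ?_
  have hmem : ∀ t, ∀ g ∈ S t, g ∈ Finset.univ.biUnion S := fun t g hg =>
    Finset.mem_biUnion.mpr ⟨t, Finset.mem_univ t, hg⟩
  obtain ⟨H, hsection, hinj⟩ := exists_generic_levelSet (Finset.univ.biUnion S)
    (fun g hg => by obtain ⟨t, -, hg⟩ := Finset.mem_biUnion.mp hg; exact (hS t g hg).1)
    (fun g hg hbot => by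
      obtain ⟨t, -, hg⟩ := Finset.mem_biUnion.mp hg
      have := (hS t g hg).2
      rw [hbot, finrank_bot] at this
      omega)
  refine ⟨(· ⊓ H), fun _ _ hle => inf_le_inf_right H hle, fun t g hg => ?_, fun t g₁ h₁ g₂ h₂ =>
    hinj g₁ (hmem t g₁ h₁) g₂ (hmem t g₂ h₂) (by rw [(hS t g₁ h₁).2, (hS t g₂ h₂).2])⟩
  obtain ⟨hne, hrank⟩ := hsection g (hmem t g hg)
  rw [(hS t g hg).2] at hrank
  exact ⟨hne, by dsimp only; omega⟩

theorem succ_ambientDim (hkn : k + d ≤ n) (h : BoundsFlagCount d f n k) :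
    BoundsFlagCount d f (n + 1) k := by
  refine h.of_exists_map fun S hS => ?_
  have hmem : ∀ t, ∀ g ∈ S t, g ∈ Finset.univ.biUnion S := fun t g hg =>
    Finset.mem_biUnion.mpr ⟨t, Finset.mem_univ t, hg⟩
  obtain ⟨π, hrank, hinj⟩ := exists_generic_projection (W := Fin n → ℝ) (by simp)
    (Finset.univ.biUnion S)
    (fun g hg => by obtain ⟨t, -, hg⟩ := Finset.mem_biUnion.mp hg; exact (hS t g hg).1)
    (fun g hg => by
      obtain ⟨t, -, hg⟩ := Finset.mem_biUnion.mp hg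
      rw [(hS t g hg).2, Module.finrank_fin_fun]
      omega)
  refine ⟨(·.map π.toAffineMap), fun _ _ hle => map_mono _ hle, fun t g hg => ?_,
    fun t g₁ h₁ g₂ h₂ =>
    hinj g₁ (hmem t g₁ h₁) g₂ (hmem t g₂ h₂) (by rw [(hS t g₁ h₁).2, (hS t g₂ h₂).2])⟩
  dsimp only
  exact ⟨coe_map π.toAffineMap g ▸ (hS t g hg).1.image _,
    (hrank g (hmem t g hg)).trans (hS t g hg).2⟩

end BoundsFlagCount

theorem lifting_lemma_general (d : ℕ) (f : (Fin d → ℕ) → ℝ)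
    (hf : ∀ S : Fin d → Finset (AffineSubspace ℝ (Fin d → ℝ)),
        (∀ i : Fin d, ∀ g ∈ S i, IsFlat d i g) →
        (flagCount d d S : ℝ) ≤ f (fun i => (S i).card)) :
    ∀ m j : ℕ, j ≤ m →
      ∀ S : Fin d → Finset (AffineSubspace ℝ (Fin (d + m) → ℝ)),
        (∀ t : Fin d, ∀ g ∈ S t, IsFlat (d + m) (j + t) g) →
        (flagCount (d + m) d S : ℝ) ≤ f (fun t => (S t).card) := by
  intro m j _
  have base : BoundsFlagCount d f d 0 := fun S hS => hf S (by simpa using hS)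
  have ambient : ∀ m, BoundsFlagCount d f (d + m) 0 := by
    intro m
    induction m with
    | zero => exact base
    | succ m ih => exact (ih.succ_ambientDim (by omega) : BoundsFlagCount d f (d + m + 1) 0)
  have dim : ∀ j, BoundsFlagCount d f (d + m) j := by
    intro j
    induction j with
    | zero => exact ambient m
    | succ j ih => exact ih.succ_flatDim
  exact dim j

/-- Lifting lemma: if `f` bounds the number of complete flags in `ℝ^d`, then for all
`m ≥ 0` and `0 ≤ j ≤ m`, `f` also bounds the number of partial flags of `i`-flats,
`i = j, …, j+d-1`, in `ℝ^{d+m}`. -/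
theorem lifting_lemma (d : ℕ) (hd : 2 ≤ d) (f : (Fin d → ℕ) → ℝ)
    (hf : ∀ S : Fin d → Finset (AffineSubspace ℝ (Fin d → ℝ)),
        (∀ i : Fin d, ∀ g ∈ S i, IsFlat d i g) →
        (flagCount d d S : ℝ) ≤ f (fun i => (S i).card)) :
    ∀ m j : ℕ, j ≤ m →
      ∀ S : Fin d → Finset (AffineSubspace ℝ (Fin (d + m) → ℝ)),
        (∀ t : Fin d, ∀ g ∈ S t, IsFlat (d + m) (j + t) g) →
        (flagCount (d + m) d S : ℝ) ≤ f (fun t => (S t).card) :=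
  lifting_lemma_general d f hf
end
end

section
/- Let π be a non-vertical plane in R^3, and write its normal vector (after scaling) as (b, −a, 1). Let p be the unique point of π whose x-coordinate equals a and whose y-coordinate equals b (the Legendrian point of π). Then: (1) every line through p contained in π is Legendrian; and (2) every point q ∈ π with q ≠ p is incident to exactly one Legendrian line contained in π. -/
open scoped Classical
noncomputable section

/-- A line in `ℝ^3`: a nonempty affine subspace of dimension `1`. -/
def IsLine (ℓ : AffineSubspace ℝ (Fin 3 → ℝ)) : Prop :=
  (ℓ : Set (Fin 3 → ℝ)).Nonempty ∧ Module.finrank ℝ ℓ.direction = 1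

/-- A plane in `ℝ^3`: a nonempty affine subspace of dimension `2`. -/
def IsPlane (π : AffineSubspace ℝ (Fin 3 → ℝ)) : Prop :=
  (π : Set (Fin 3 → ℝ)).Nonempty ∧ Module.finrank ℝ π.direction = 2

/-- A line is Legendrian if it is orthogonal to the vector field `F(x,y,z) = (y, -x, 1)`
at each of its points: for every point `p` on the line and every direction vector `v`,
`v₀ p₁ - v₁ p₀ + v₂ = 0`. -/
def Legendrian (ℓ : AffineSubspace ℝ (Fin 3 → ℝ)) : Prop :=
  ∀ p ∈ ℓ, ∀ v ∈ ℓ.direction, v 0 * p 1 - v 1 * p 0 + v 2 = 0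

/-- Let `π` be a non-vertical plane with normal vector `(b, -a, 1)`, and let `p` be the
point of `π` with `x`-coordinate `a` and `y`-coordinate `b` (the Legendrian point of `π`).
Then (1) every line through `p` contained in `π` is Legendrian and (2) every point
`q ∈ π`, `q ≠ p`, is incident to exactly one Legendrian line contained in `π`. -/
theorem legendrian_point_of_plane (a b : ℝ) (π : AffineSubspace ℝ (Fin 3 → ℝ))
    (hπ : IsPlane π)
    (hnormal : ∀ v : Fin 3 → ℝ, v ∈ π.direction ↔ b * v 0 - a * v 1 + v 2 = 0)
    (p : Fin 3 → ℝ) (hp : p ∈ π) (hpa : p 0 = a) (hpb : p 1 = b) :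
    (∀ ℓ : AffineSubspace ℝ (Fin 3 → ℝ), IsLine ℓ → p ∈ ℓ → ℓ ≤ π → Legendrian ℓ) ∧
    (∀ q, q ∈ π → q ≠ p →
      ∃! ℓ : AffineSubspace ℝ (Fin 3 → ℝ),
        IsLine ℓ ∧ Legendrian ℓ ∧ q ∈ ℓ ∧ ℓ ≤ π) := by
  have hw2 : ∀ v ∈ π.direction, v 2 = a * v 1 - b * v 0 := by
    intro v hv; have := (hnormal v).mp hv; linarith
  have part1 : ∀ ℓ : AffineSubspace ℝ (Fin 3 → ℝ), IsLine ℓ → p ∈ ℓ → ℓ ≤ π → Legendrian ℓ := by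
    intro ℓ hℓ hpℓ hle x hx v hv
    obtain ⟨u, hu0, hu⟩ := finrank_eq_one_iff'.mp hℓ.2
    obtain ⟨s, hs⟩ := hu ⟨v, hv⟩
    have hwmem : x - p ∈ ℓ.direction := by
      simpa [vsub_eq_sub] using AffineSubspace.vsub_mem_direction hx hpℓ
    obtain ⟨t, ht⟩ := hu ⟨x - p, hwmem⟩
    have hv' : v = s • (u : Fin 3 → ℝ) := (congrArg Subtype.val hs).symm
    have hx' : x - p = t • (u : Fin 3 → ℝ) := (congrArg Subtype.val ht).symm
    have hud : (u : Fin 3 → ℝ) ∈ π.direction := AffineSubspace.direction_le hle u.2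
    have hu2 : (u : Fin 3 → ℝ) 2 = a * (u : Fin 3 → ℝ) 1 - b * (u : Fin 3 → ℝ) 0 := hw2 _ hud
    have hA0 : v 0 = s * (u : Fin 3 → ℝ) 0 := by rw [hv']; simp
    have hA1 : v 1 = s * (u : Fin 3 → ℝ) 1 := by rw [hv']; simp
    have hA2 : v 2 = s * (u : Fin 3 → ℝ) 2 := by rw [hv']; simp
    have hB0 : x 0 = p 0 + t * (u : Fin 3 → ℝ) 0 := by
      have := congrFun hx' 0; simp [Pi.sub_apply] at this; linarith
    have hB1 : x 1 = p 1 + t * (u : Fin 3 → ℝ) 1 := by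
      have := congrFun hx' 1; simp [Pi.sub_apply] at this; linarith
    rw [hA0, hA1, hA2, hB0, hB1, hu2, hpa, hpb]; ring
  refine ⟨part1, ?_⟩
  intro q hq hqp
  set w : Fin 3 → ℝ := q - p with hwdef
  have hwmem : w ∈ π.direction := by
    simpa [vsub_eq_sub] using AffineSubspace.vsub_mem_direction hq hp
  have hwne : w ≠ 0 := sub_ne_zero.mpr hqp
  have hw2' : w 2 = a * w 1 - b * w 0 := hw2 w hwmem
  have hw01 : w 0 ≠ 0 ∨ w 1 ≠ 0 := by
    by_contra h
    push_neg at h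
    apply hwne
    funext i
    fin_cases i
    · exact h.1
    · exact h.2
    · show w 2 = 0
      rw [hw2', h.1, h.2]; ring
  set ℓ : AffineSubspace ℝ (Fin 3 → ℝ) := affineSpan ℝ {p, q} with hℓdef
  have hpℓ : p ∈ ℓ := mem_affineSpan ℝ (by simp)
  have hqℓ : q ∈ ℓ := mem_affineSpan ℝ (by simp)
  have hdir : ℓ.direction = Submodule.span ℝ {w} := by
    rw [hℓdef, direction_affineSpan, vectorSpan_pair_rev]
    simp [hwdef, vsub_eq_sub, Submodule.span_singleton_eq_span_singleton]
  have hline : IsLine ℓ := by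
    refine ⟨⟨p, hpℓ⟩, ?_⟩
    rw [hdir]
    exact finrank_span_singleton hwne
  have hle : ℓ ≤ π := by
    rw [hℓdef]
    apply affineSpan_le.mpr
    intro x hx
    rcases hx with rfl | hx
    · exact hp
    · rw [Set.mem_singleton_iff] at hx; subst hx; exact hq
  refine ⟨ℓ, ⟨hline, part1 ℓ hline hpℓ hle, hqℓ, hle⟩, ?_⟩
  rintro ℓ' ⟨hline', hleg', hqℓ', hle'⟩
  obtain ⟨u, hu0, hu⟩ := finrank_eq_one_iff'.mp hline'.2
  have hud : (u : Fin 3 → ℝ) ∈ π.direction := AffineSubspace.direction_le hle' u.2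
  have hu2 : (u : Fin 3 → ℝ) 2 = a * (u : Fin 3 → ℝ) 1 - b * (u : Fin 3 → ℝ) 0 := hw2 _ hud
  have hlegq := hleg' q hqℓ' _ u.2
  have hw0 : w 0 = q 0 - a := by rw [hwdef]; simp [hpa]
  have hw1 : w 1 = q 1 - b := by rw [hwdef]; simp [hpb]
  have key : (u : Fin 3 → ℝ) 0 * w 1 = (u : Fin 3 → ℝ) 1 * w 0 := by
    rw [hw0, hw1]; linear_combination hlegq - hu2
  have huspan : (u : Fin 3 → ℝ) ∈ Submodule.span ℝ {w} := by
    rcases hw01 with h0 | h1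
    · refine Submodule.mem_span_singleton.mpr ⟨(u : Fin 3 → ℝ) 0 / w 0, ?_⟩
      funext i
      fin_cases i
      · simp; field_simp
      · show (u : Fin 3 → ℝ) 0 / w 0 * w 1 = (u : Fin 3 → ℝ) 1
        rw [div_mul_eq_mul_div, div_eq_iff h0]; linear_combination key
      · show (u : Fin 3 → ℝ) 0 / w 0 * w 2 = (u : Fin 3 → ℝ) 2
        rw [hu2, hw2', div_mul_eq_mul_div, div_eq_iff h0]; linear_combination a * key
    · refine Submodule.mem_span_singleton.mpr ⟨(u : Fin 3 → ℝ) 1 / w 1, ?_⟩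
      funext i
      fin_cases i
      · show (u : Fin 3 → ℝ) 1 / w 1 * w 0 = (u : Fin 3 → ℝ) 0
        rw [div_mul_eq_mul_div, div_eq_iff h1]; linear_combination -key
      · simp; field_simp
      · show (u : Fin 3 → ℝ) 1 / w 1 * w 2 = (u : Fin 3 → ℝ) 2
        rw [hu2, hw2', div_mul_eq_mul_div, div_eq_iff h1]; linear_combination b * key
  have hdir' : ℓ'.direction = ℓ.direction := by
    rw [hdir]
    apply Submodule.eq_of_le_of_finrank_eq
    · intro x hx
      obtain ⟨t, ht⟩ := hu ⟨x, hx⟩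
      have : x = t • (u : Fin 3 → ℝ) := (congrArg Subtype.val ht).symm
      rw [this]
      exact Submodule.smul_mem _ _ huspan
    · rw [hline'.2, finrank_span_singleton hwne]
  exact AffineSubspace.ext_of_direction_eq hdir' ⟨q, hqℓ', hqℓ⟩
end
end

section
/- Let S be a finite set of distinct planes in R^3, let l ≥ 2 be an integer, and let L_0 be a finite set of distinct lines in R^3 each of which is contained in at least l planes of S. Then for every plane π in R^3 (not necessarily in S), the number of lines of L_0 contained in π is at most |S|/(l − 1). -/
open scoped Classical
noncomputable section

lemma line_eq_of_le_of_line {ℓ s : AffineSubspace ℝ (Fin 3 → ℝ)}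
    (hℓ : IsLine ℓ) (hle : ℓ ≤ s) (hson : (s : Set (Fin 3 → ℝ)).Nonempty)
    (hsd : Module.finrank ℝ s.direction ≤ 1) : ℓ = s := by
  have hdir : ℓ.direction ≤ s.direction := AffineSubspace.direction_le hle
  have hd : ℓ.direction = s.direction :=
    Submodule.eq_of_le_of_finrank_le hdir (hℓ.2 ▸ hsd)
  apply AffineSubspace.ext_of_direction_eq hd
  obtain ⟨x, hx⟩ := hℓ.1
  exact ⟨x, hx, hle hx⟩

/-- Two distinct lines in a common plane determine it: any plane containing both equals it. -/
lemma plane_unique {ℓ₁ ℓ₂ π π' : AffineSubspace ℝ (Fin 3 → ℝ)}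
    (h1 : IsLine ℓ₁) (h2 : IsLine ℓ₂) (hne : ℓ₁ ≠ ℓ₂)
    (hπ : IsPlane π) (hπ' : IsPlane π')
    (h1π : ℓ₁ ≤ π) (h2π : ℓ₂ ≤ π) (h1' : ℓ₁ ≤ π') (h2' : ℓ₂ ≤ π') : π' = π := by
  set s := ℓ₁ ⊔ ℓ₂ with hs
  have hsπ : s ≤ π := sup_le h1π h2π
  have hsπ' : s ≤ π' := sup_le h1' h2'
  have hson : (s : Set (Fin 3 → ℝ)).Nonempty := by
    obtain ⟨x, hx⟩ := h1.1
    exact ⟨x, le_sup_left (a := ℓ₁) (b := ℓ₂) hx⟩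
  have h2le : 2 ≤ Module.finrank ℝ s.direction := by
    by_contra h
    push_neg at h
    have hd1 : Module.finrank ℝ s.direction ≤ 1 := by omega
    have e1 : ℓ₁ = s := line_eq_of_le_of_line h1 le_sup_left hson hd1
    have e2 : ℓ₂ = s := line_eq_of_le_of_line h2 le_sup_right hson hd1
    exact hne (e1.trans e2.symm)
  have key : ∀ p : AffineSubspace ℝ (Fin 3 → ℝ), IsPlane p → s ≤ p → s = p := by
    intro p hp hsp
    have hdir : s.direction ≤ p.direction := AffineSubspace.direction_le hsp
    have hd : s.direction = p.direction :=
      Submodule.eq_of_le_of_finrank_le hdir (by rw [hp.2]; exact h2le)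
    apply AffineSubspace.ext_of_direction_eq hd
    obtain ⟨x, hx⟩ := hson
    exact ⟨x, hx, hsp hx⟩
  rw [← key π hπ hsπ, ← key π' hπ' hsπ']

/-- If every line of `L₀` is contained in at least `l ≥ 2` planes of `S`, then no plane
(whether or not it belongs to `S`) contains more than `|S|/(l-1)` lines of `L₀`. -/
theorem lines_in_plane_bound (S L₀ : Finset (AffineSubspace ℝ (Fin 3 → ℝ)))
    (l : ℕ) (hl : 2 ≤ l)
    (hS : ∀ π ∈ S, IsPlane π) (hL : ∀ ℓ ∈ L₀, IsLine ℓ)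
    (hcov : ∀ ℓ ∈ L₀, l ≤ (S.filter (fun π => ℓ ≤ π)).card) :
    ∀ π : AffineSubspace ℝ (Fin 3 → ℝ), IsPlane π →
      ((L₀.filter (fun ℓ => ℓ ≤ π)).card : ℝ) ≤ (S.card : ℝ) / ((l : ℝ) - 1) := by
  intro π hπ
  set T := L₀.filter (fun ℓ => ℓ ≤ π) with hT
  set f : AffineSubspace ℝ (Fin 3 → ℝ) → Finset (AffineSubspace ℝ (Fin 3 → ℝ)) :=
    fun ℓ => (S.filter (fun π' => ℓ ≤ π')).erase π with hf
  have hcardf : ∀ ℓ ∈ T, l - 1 ≤ (f ℓ).card := by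
    intro ℓ hℓ
    rw [hT, Finset.mem_filter] at hℓ
    have h1 := hcov ℓ hℓ.1
    have h2 := Finset.pred_card_le_card_erase
      (s := S.filter (fun π' => ℓ ≤ π')) (a := π)
    simp only [hf]
    omega
  have hdisj : ∀ ℓ₁ ∈ T, ∀ ℓ₂ ∈ T, ℓ₁ ≠ ℓ₂ → Disjoint (f ℓ₁) (f ℓ₂) := by
    intro ℓ₁ hℓ₁ ℓ₂ hℓ₂ hne
    rw [hT, Finset.mem_filter] at hℓ₁ hℓ₂
    rw [Finset.disjoint_left]
    intro p hp1 hp2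
    rw [hf, Finset.mem_erase, Finset.mem_filter] at hp1 hp2
    exact hp1.1 (plane_unique (hL ℓ₁ hℓ₁.1) (hL ℓ₂ hℓ₂.1) hne hπ (hS p hp1.2.1)
      hℓ₁.2 hℓ₂.2 hp1.2.2 hp2.2.2)
  have hsub : T.biUnion f ⊆ S := by
    intro p hp
    rw [Finset.mem_biUnion] at hp
    obtain ⟨ℓ, _, hp⟩ := hp
    rw [hf, Finset.mem_erase, Finset.mem_filter] at hp
    exact hp.2.1
  have hmain : (l - 1) * T.card ≤ S.card := by
    calc (l - 1) * T.card = ∑ ℓ ∈ T, (l - 1) := by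
          rw [Finset.sum_const, smul_eq_mul, mul_comm]
      _ ≤ ∑ ℓ ∈ T, (f ℓ).card := Finset.sum_le_sum hcardf
      _ = (T.biUnion f).card := (Finset.card_biUnion hdisj).symm
      _ ≤ S.card := Finset.card_le_card hsub
  have hlpos : (0 : ℝ) < (l : ℝ) - 1 := by
    have : (2 : ℝ) ≤ l := by exact_mod_cast hl
    linarith
  rw [le_div_iff₀ hlpos]
  have : ((l - 1) * T.card : ℕ) ≤ (S.card : ℕ) := hmain
  have hcast : (((l - 1) * T.card : ℕ) : ℝ) ≤ (S.card : ℝ) := by exact_mod_cast this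
  rw [Nat.cast_mul, Nat.cast_sub (by omega)] at hcast
  push_cast at hcast ⊢
  linarith
end
end

section
/- For all positive integers b and N with b dividing N and b ≤ N, there exist a set P of N distinct points, a set L of N/b distinct lines, and a set S of N distinct planes in R^3 such that each line of L contains exactly b points of P and is contained in exactly b planes of S, and the number of flags satisfies I(P, L, S) = bN. -/
open scoped Classical
noncomputable section

/-- The number of flags `(p, ℓ, π)` with `p ∈ P`, `ℓ ∈ L`, `π ∈ S`, `p ∈ ℓ`, `ℓ ⊆ π`. -/
def flags3 (P : Finset (Fin 3 → ℝ)) (L S : Finset (AffineSubspace ℝ (Fin 3 → ℝ))) : ℕ :=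
  Set.ncard {t : (Fin 3 → ℝ) × AffineSubspace ℝ (Fin 3 → ℝ) × AffineSubspace ℝ (Fin 3 → ℝ) |
    t.1 ∈ P ∧ t.2.1 ∈ L ∧ t.2.2 ∈ S ∧ t.1 ∈ t.2.1 ∧ t.2.1 ≤ t.2.2}

/-!
Take the `m = N / b` parallel lines `x = i, z = 0` (`i < m`), put the `b` points `(i, j, 0)`
(`j < b`) on the `i`-th line and pass through it the `b` planes `z = (k + 1) (x - i)` (`k < b`).
A point lies on a line, and a line in a plane, only when their first indices agree, so a flag
is a line together with one of its `b` points and one of its `b` planes: `m b² = b N` flags.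
-/

open Finset

theorem flags3_eq_sum (P : Finset (Fin 3 → ℝ)) (L S : Finset (AffineSubspace ℝ (Fin 3 → ℝ))) :
    flags3 P L S = ∑ ℓ ∈ L, #{p ∈ P | p ∈ ℓ} * #{π ∈ S | ℓ ≤ π} := by
  have hflags : {t : (Fin 3 → ℝ) × AffineSubspace ℝ (Fin 3 → ℝ) × AffineSubspace ℝ (Fin 3 → ℝ) |
      t.1 ∈ P ∧ t.2.1 ∈ L ∧ t.2.2 ∈ S ∧ t.1 ∈ t.2.1 ∧ t.2.1 ≤ t.2.2} =
      ↑(L.biUnion fun ℓ => {p ∈ P | p ∈ ℓ} ×ˢ {ℓ} ×ˢ {π ∈ S | ℓ ≤ π}) := by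
    ext ⟨p, ℓ, π⟩
    simp only [Set.mem_ofPred_eq, coe_biUnion, coe_product, coe_filter, coe_singleton,
      Set.mem_iUnion, Set.mem_prod, Set.mem_singleton_iff]
    aesop
  rw [flags3, hflags, Set.ncard_coe_finset, card_biUnion]
  · simp only [card_product, card_singleton, one_mul]
  · intro ℓ _ ℓ' _ hne
    simp only [Function.onFun, disjoint_left, mem_product, mem_singleton]
    rintro _ ⟨-, rfl, -⟩ ⟨-, h, -⟩
    exact hne h

theorem card_filter_image_product {α β γ : Type*} [DecidableEq γ] {f : α × β → γ}
    (hf : Function.Injective f) (s : Finset α) (t : Finset β) {a : α} (ha : a ∈ s)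
    (p : γ → Prop) [DecidablePred p] (hp : ∀ x y, p (f (x, y)) ↔ x = a) :
    #{c ∈ (s ×ˢ t).image f | p c} = #t := by
  rw [filter_image, card_image_of_injective _ hf]
  simp only [hp]
  rw [filter_product_left (· = a), filter_eq' s a, if_pos ha, card_product, card_singleton,
    one_mul]

namespace FlagExample

def point (a c : ℝ) : Fin 3 → ℝ := ![a, c, 0]

def line (a : ℝ) : AffineSubspace ℝ (Fin 3 → ℝ) :=
  AffineSubspace.mk' (point a 0) (ℝ ∙ ![0, 1, 0])

def plane (a s : ℝ) : AffineSubspace ℝ (Fin 3 → ℝ) :=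
  AffineSubspace.mk' (point a 0) (Submodule.span ℝ {![0, 1, 0], ![1, 0, s]})

theorem mem_line_iff {a : ℝ} {x : Fin 3 → ℝ} : x ∈ line a ↔ x 0 = a ∧ x 2 = 0 := by
  rw [line, AffineSubspace.mem_mk', Submodule.mem_span_singleton]
  constructor
  · rintro ⟨c, hc⟩
    obtain ⟨h0, h2⟩ : 0 = x 0 - a ∧ 0 = x 2 := by
      simpa [point] using And.intro (congrFun hc 0) (congrFun hc 2)
    exact ⟨by linarith, h2.symm⟩
  · rintro ⟨h0, h2⟩
    refine ⟨x 1, funext fun j => ?_⟩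
    fin_cases j <;> simp [point, h0, h2]

theorem mem_plane_iff {a s : ℝ} {x : Fin 3 → ℝ} : x ∈ plane a s ↔ x 2 = s * (x 0 - a) := by
  rw [plane, AffineSubspace.mem_mk', Submodule.mem_span_pair]
  constructor
  · rintro ⟨c, d, hcd⟩
    obtain ⟨h0, h2⟩ : d = x 0 - a ∧ d * s = x 2 := by
      simpa [point] using And.intro (congrFun hcd 0) (congrFun hcd 2)
    rw [← h2, h0, mul_comm]
  · intro h
    refine ⟨x 1, x 0 - a, funext fun j => ?_⟩
    fin_cases j <;> simp [point, h, mul_comm]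

theorem isLine_line (a : ℝ) : IsLine (line a) := by
  refine ⟨⟨point a 0, AffineSubspace.self_mem_mk' _ _⟩, ?_⟩
  rw [line, AffineSubspace.direction_mk']
  refine finrank_span_singleton fun h => ?_
  simpa using congrFun h 1

theorem isPlane_plane (a s : ℝ) : IsPlane (plane a s) := by
  refine ⟨⟨point a 0, AffineSubspace.self_mem_mk' _ _⟩, ?_⟩
  have hli : LinearIndependent ℝ ![![0, 1, 0], ![1, 0, s]] := by
    refine LinearIndependent.pair_iff.2 fun c d h => ?_
    simpa using And.intro (congrFun h 1) (congrFun h 0)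
  rw [plane, AffineSubspace.direction_mk', ← Matrix.range_cons_cons_empty _ _ ![],
    finrank_span_eq_card hli, Fintype.card_fin]

theorem point_mem_line_iff {a c a' : ℝ} : point a c ∈ line a' ↔ a = a' := by
  simp [mem_line_iff, point]

theorem line_le_plane_iff {a a' s : ℝ} (hs : s ≠ 0) : line a ≤ plane a' s ↔ a = a' := by
  constructor
  · intro h
    simpa [point, hs, sub_eq_zero] using
      mem_plane_iff.1 (h (point_mem_line_iff.2 rfl : point a 0 ∈ line a))
  · rintro rfl x hx
    rw [mem_line_iff] at hx
    rw [mem_plane_iff, hx.1, hx.2, sub_self, mul_zero]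

theorem point_injective : Function.Injective fun q : ℝ × ℝ => point q.1 q.2 := by
  rintro ⟨a, c⟩ ⟨a', c'⟩ h
  simpa [point] using And.intro (congrFun h 0) (congrFun h 1)

theorem line_injective : Function.Injective line := fun a a' h =>
  point_mem_line_iff.1 (h ▸ point_mem_line_iff.2 rfl : point a 0 ∈ line a')

theorem plane_injective_of_ne_zero {a a' s s' : ℝ} (hs' : s' ≠ 0)
    (h : plane a s = plane a' s') : a = a' ∧ s = s' := by
  have ha : a = a' := by
    simpa [point, hs', sub_eq_zero] using
      mem_plane_iff.1 (h ▸ mem_plane_iff.2 (by simp [point]) : point a 0 ∈ plane a' s')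
  subst ha
  simpa using mem_plane_iff.1 (h ▸ mem_plane_iff.2 (by simp) : ![a + 1, 0, s] ∈ plane a s')

def points (m b : ℕ) : Finset (Fin 3 → ℝ) :=
  (range m ×ˢ range b).image fun q => point q.1 q.2

def lines (m : ℕ) : Finset (AffineSubspace ℝ (Fin 3 → ℝ)) :=
  (range m).image fun i : ℕ => line i

-- The slopes are shifted to `k + 1` because every plane of slope `0` is `z = 0`.
def planes (m b : ℕ) : Finset (AffineSubspace ℝ (Fin 3 → ℝ)) :=
  (range m ×ˢ range b).image fun q => plane q.1 (q.2 + 1)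

theorem point_natCast_injective : Function.Injective fun q : ℕ × ℕ => point q.1 q.2 :=
  point_injective.comp (Prod.map_injective.2 ⟨Nat.cast_injective, Nat.cast_injective⟩)

theorem plane_natCast_injective : Function.Injective fun q : ℕ × ℕ => plane q.1 (q.2 + 1) := by
  rintro ⟨i, k⟩ ⟨i', k'⟩ h
  obtain ⟨hi, hk⟩ := plane_injective_of_ne_zero (by positivity) h
  simp only [Nat.cast_inj, add_left_inj] at hi hk
  rw [hi, hk]

theorem card_points (m b : ℕ) : #(points m b) = m * b := by
  rw [points, card_image_of_injective _ point_natCast_injective, card_product, card_range,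
    card_range]

theorem card_lines (m : ℕ) : #(lines m) = m := by
  rw [lines, card_image_of_injective _ fun _ _ h => Nat.cast_injective (line_injective h),
    card_range]

theorem card_planes (m b : ℕ) : #(planes m b) = m * b := by
  rw [planes, card_image_of_injective _ plane_natCast_injective, card_product, card_range,
    card_range]

theorem isLine_of_mem_lines {m : ℕ} {ℓ} (hℓ : ℓ ∈ lines m) : IsLine ℓ := by
  obtain ⟨i, -, rfl⟩ := mem_image.1 hℓ
  exact isLine_line i

theorem isPlane_of_mem_planes {m b : ℕ} {π} (hπ : π ∈ planes m b) : IsPlane π := by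
  obtain ⟨q, -, rfl⟩ := mem_image.1 hπ
  exact isPlane_plane _ _

theorem card_incident_of_mem_lines {m b : ℕ} {ℓ} (hℓ : ℓ ∈ lines m) :
    #{p ∈ points m b | p ∈ ℓ} = b ∧ #{π ∈ planes m b | ℓ ≤ π} = b := by
  obtain ⟨i, hi, rfl⟩ := mem_image.1 hℓ
  constructor
  · rw [points, card_filter_image_product point_natCast_injective _ _ hi, card_range]
    intro i' j
    simp only [point_mem_line_iff, Nat.cast_inj]
  · rw [planes, card_filter_image_product plane_natCast_injective _ _ hi, card_range]
    intro i' k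
    simp only [line_le_plane_iff (by positivity : ((k : ℝ) + 1) ≠ 0), Nat.cast_inj, eq_comm]

end FlagExample

open FlagExample in
theorem flags_lower_bound_bN_general (b N : ℕ) (hdvd : b ∣ N) :
    ∃ (P : Finset (Fin 3 → ℝ)) (L S : Finset (AffineSubspace ℝ (Fin 3 → ℝ))),
      P.card = N ∧ L.card = N / b ∧ S.card = N ∧
      (∀ ℓ ∈ L, IsLine ℓ) ∧ (∀ π ∈ S, IsPlane π) ∧
      (∀ ℓ ∈ L, (P.filter (fun p => p ∈ ℓ)).card = b ∧
        (S.filter (fun π => ℓ ≤ π)).card = b) ∧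
      flags3 P L S = b * N := by
  have hN : N / b * b = N := Nat.div_mul_cancel hdvd
  refine ⟨points (N / b) b, lines (N / b), planes (N / b) b, by rw [card_points, hN],
    card_lines _, by rw [card_planes, hN], fun _ => isLine_of_mem_lines,
    fun _ => isPlane_of_mem_planes, fun _ => card_incident_of_mem_lines, ?_⟩
  calc flags3 (points (N / b) b) (lines (N / b)) (planes (N / b) b)
      = ∑ _ℓ ∈ lines (N / b), b * b := by
        rw [flags3_eq_sum]
        refine sum_congr rfl fun ℓ hℓ => ?_
        rw [(card_incident_of_mem_lines hℓ).1, (card_incident_of_mem_lines hℓ).2]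
    _ = b * N := by rw [sum_const, card_lines, smul_eq_mul, ← mul_assoc, hN, mul_comm]

/-- For `b ∣ N`, `b ≤ N`, there are `N` points, `N/b` lines, and `N` planes such that each
line contains exactly `b` of the points and lies on exactly `b` of the planes, giving
exactly `bN` flags. -/
theorem flags_lower_bound_bN (b N : ℕ) (hb : 0 < b) (hN : 0 < N)
    (hdvd : b ∣ N) (hbN : b ≤ N) :
    ∃ (P : Finset (Fin 3 → ℝ)) (L S : Finset (AffineSubspace ℝ (Fin 3 → ℝ))),
      P.card = N ∧ L.card = N / b ∧ S.card = N ∧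
      (∀ ℓ ∈ L, IsLine ℓ) ∧ (∀ π ∈ S, IsPlane π) ∧
      (∀ ℓ ∈ L, (P.filter (fun p => p ∈ ℓ)).card = b ∧
        (S.filter (fun π => ℓ ≤ π)).card = b) ∧
      flags3 P L S = b * N :=
  flags_lower_bound_bN_general b N hdvd
end
end

section
/- There exist constants c > 0 and C > 0 such that for all sufficiently large positive integers b and N with b^4 ≤ N, there exist a set P of distinct points, a set L of distinct lines, and a set S of distinct planes in R^3 with |P| ≤ CN, |L| ≤ CN, |S| ≤ CN, such that each line of L contains at most b points of P and is contained in at most b planes of S, and the number of flags satisfies I(P, L, S) ≥ c · N b^2. -/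
open scoped Classical
noncomputable section

/-!
Fix `B = b * d` with `B⁴ ≤ N < 16 B⁴`. Take the lattice points `(x, u, v)` with `x < b`, the
lines `x ↦ (x, y + s x, z + t x)` and the planes `z = a x + β y + c` with `β < b`, all with natural
parameters in boxes of size `O(B⁴)`. A line lies in the plane `(a, β, c)` iff `t = a + β s` and
`z = β y + c`, so the points of a line are indexed by `x < b` and its planes by `β < b`.
Conversely every choice of `x, s, y, a, β, c` in boxes of total size `b² B⁴` yields a distinct flag.
-/

open Finset

def graphLine (s t y z : ℝ) : AffineSubspace ℝ (Fin 3 → ℝ) :=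
  AffineSubspace.mk' ![0, y, z] (Submodule.span ℝ {![1, s, t]})

def graphPlane (a β c : ℝ) : AffineSubspace ℝ (Fin 3 → ℝ) :=
  AffineSubspace.mk' ![0, 0, c] (Submodule.span ℝ {![1, 0, a], ![0, 1, β]})

section Geometry

variable {s t y z s' t' y' z' a β c a' β' c' : ℝ} {p : Fin 3 → ℝ}

theorem mem_graphLine : p ∈ graphLine s t y z ↔ ∃ x : ℝ, p = ![x, y + s * x, z + t * x] := by
  rw [graphLine, AffineSubspace.mem_mk', Submodule.mem_span_singleton]
  refine exists_congr fun x => ⟨fun h => ?_, fun h => ?_⟩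
  · have h0 := congrFun h 0
    have h1 := congrFun h 1
    have h2 := congrFun h 2
    simp only [Pi.smul_apply, Pi.vsub_apply, Matrix.cons_val, smul_eq_mul, vsub_eq_sub, mul_one,
      sub_zero] at h0 h1 h2
    ext i; fin_cases i <;> simp only [Fin.zero_eta, Fin.mk_one, Fin.reduceFinMk,
      Matrix.cons_val_zero, Matrix.cons_val_one, Matrix.cons_val] <;> linarith
  · subst h; ext i; fin_cases i <;> simp only [Fin.zero_eta, Fin.mk_one, Fin.reduceFinMk,
      Pi.smul_apply, Pi.vsub_apply, Matrix.cons_val_zero, Matrix.cons_val_one, Matrix.cons_val,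
      smul_eq_mul, vsub_eq_sub] <;> ring

theorem mem_graphPlane : p ∈ graphPlane a β c ↔ p 2 = a * p 0 + β * p 1 + c := by
  rw [graphPlane, AffineSubspace.mem_mk', Submodule.mem_span_pair]
  constructor
  · rintro ⟨u, v, h⟩
    have h0 := congrFun h 0
    have h1 := congrFun h 1
    have h2 := congrFun h 2
    simp only [Matrix.smul_cons, Pi.add_apply, Pi.vsub_apply, Matrix.cons_val, smul_eq_mul,
      vsub_eq_sub, mul_one, mul_zero, add_zero, zero_add, sub_zero] at h0 h1 h2
    rw [← h0, ← h1]; linarith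
  · intro h
    refine ⟨p 0, p 1, ?_⟩
    ext i; fin_cases i <;> simp; linarith

theorem isLine_graphLine : IsLine (graphLine s t y z) :=
  ⟨⟨_, AffineSubspace.self_mem_mk' _ _⟩, by
    rw [graphLine, AffineSubspace.direction_mk']
    exact finrank_span_singleton fun h => by simpa using congrFun h 0⟩

theorem isPlane_graphPlane : IsPlane (graphPlane a β c) := by
  refine ⟨⟨_, AffineSubspace.self_mem_mk' _ _⟩, ?_⟩
  have hli : LinearIndependent ℝ ![![1, 0, a], ![0, 1, β]] := by
    refine LinearIndependent.pair_iff.2 fun u v h => ?_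
    simpa using And.intro (congrFun h 0) (congrFun h 1)
  rw [graphPlane, AffineSubspace.direction_mk']
  have h := finrank_span_eq_card hli
  rwa [Matrix.range_cons, Matrix.range_cons, Matrix.range_empty, Set.union_empty,
    Fintype.card_fin, Set.singleton_union] at h

theorem graphLine_le_graphPlane_iff :
    graphLine s t y z ≤ graphPlane a β c ↔ t = a + β * s ∧ z = β * y + c := by
  constructor
  · intro h
    have h0 := mem_graphPlane.1 (h (mem_graphLine.2 ⟨0, rfl⟩))
    have h1 := mem_graphPlane.1 (h (mem_graphLine.2 ⟨1, rfl⟩))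
    simp only [Matrix.cons_val, mul_zero, add_zero, mul_one] at h0 h1
    constructor <;> linarith
  · rintro ⟨rfl, rfl⟩ p hp
    obtain ⟨x, rfl⟩ := mem_graphLine.1 hp
    rw [mem_graphPlane]
    simp only [Matrix.cons_val]
    ring

theorem graphLine_inj :
    graphLine s t y z = graphLine s' t' y' z' ↔ s = s' ∧ t = t' ∧ y = y' ∧ z = z' := by
  refine ⟨fun h => ?_, by rintro ⟨rfl, rfl, rfl, rfl⟩; rfl⟩
  have h0 := h ▸ mem_graphLine.2 ⟨0, rfl⟩
  have h1 := h ▸ mem_graphLine.2 ⟨1, rfl⟩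
  obtain ⟨x₀, hx₀⟩ := mem_graphLine.1 h0
  obtain ⟨x₁, hx₁⟩ := mem_graphLine.1 h1
  simp only [funext_iff, Fin.forall_fin_succ, Matrix.cons_val_zero, Matrix.cons_val_succ,
    Matrix.cons_val_fin_one, forall_const, mul_zero, add_zero, mul_one] at hx₀ hx₁
  obtain ⟨rfl, e₀, f₀⟩ := hx₀
  obtain ⟨rfl, e₁, f₁⟩ := hx₁
  refine ⟨by linarith, by linarith, by linarith, by linarith⟩

theorem graphPlane_inj :
    graphPlane a β c = graphPlane a' β' c' ↔ a = a' ∧ β = β' ∧ c = c' := by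
  refine ⟨fun h => ?_, by rintro ⟨rfl, rfl, rfl⟩; rfl⟩
  have key (p : Fin 3 → ℝ) (hp : p 2 = a * p 0 + β * p 1 + c) : p 2 = a' * p 0 + β' * p 1 + c' :=
    mem_graphPlane.1 (h ▸ mem_graphPlane.2 hp)
  have k0 := key ![0, 0, c] (by simp)
  have k1 := key ![1, 0, a + c] (by simp)
  have k2 := key ![0, 1, β + c] (by simp)
  simp only [Matrix.cons_val, mul_zero, mul_one, add_zero, zero_add] at k0 k1 k2
  refine ⟨by linarith, by linarith, by linarith⟩

end Geometry

theorem card_le_flags3 {ι : Type*} {P : Finset (Fin 3 → ℝ)}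
    {L S : Finset (AffineSubspace ℝ (Fin 3 → ℝ))} (I : Finset ι)
    (f : ι → (Fin 3 → ℝ) × AffineSubspace ℝ (Fin 3 → ℝ) × AffineSubspace ℝ (Fin 3 → ℝ))
    (hf : Set.InjOn f I)
    (hflag : ∀ i ∈ I, (f i).1 ∈ P ∧ (f i).2.1 ∈ L ∧ (f i).2.2 ∈ S ∧
      (f i).1 ∈ (f i).2.1 ∧ (f i).2.1 ≤ (f i).2.2) :
    I.card ≤ flags3 P L S := by
  rw [flags3, ← Set.ncard_coe_finset]
  refine Set.ncard_le_ncard_of_injOn f hflag hf ((P ×ˢ L ×ˢ S).finite_toSet.subset ?_)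
  rintro ⟨p, ℓ, π⟩ ⟨hp, hℓ, hπ, -⟩
  simp [hp, hℓ, hπ]

theorem card_filter_mem_graphLine_le {P : Finset (Fin 3 → ℝ)} {b : ℕ}
    (hP : ∀ p ∈ P, ∃ x < b, p 0 = x) (s t y z : ℝ) :
    (P.filter (· ∈ graphLine s t y z)).card ≤ b := by
  calc _ ≤ ((range b).image fun x : ℕ => (![x, y + s * x, z + t * x] : Fin 3 → ℝ)).card := by
        refine card_le_card fun p hp => ?_
        obtain ⟨hpP, hpℓ⟩ := mem_filter.1 hp
        obtain ⟨x, hx, hp0⟩ := hP p hpP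
        obtain ⟨x', rfl⟩ := mem_graphLine.1 hpℓ
        simp only [Matrix.cons_val_zero] at hp0
        subst hp0
        exact mem_image_of_mem _ (mem_range.2 hx)
    _ ≤ b := card_image_le.trans (card_range b).le

theorem card_filter_graphLine_le_le {S : Finset (AffineSubspace ℝ (Fin 3 → ℝ))} {b : ℕ}
    (hS : ∀ π ∈ S, ∃ a c : ℝ, ∃ β < b, π = graphPlane a β c) (s t y z : ℝ) :
    (S.filter (graphLine s t y z ≤ ·)).card ≤ b := by
  calc _ ≤ ((range b).image fun β : ℕ => graphPlane (t - β * s) β (z - β * y)).card := by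
        refine card_le_card fun π hπ => ?_
        obtain ⟨hπS, hℓπ⟩ := mem_filter.1 hπ
        obtain ⟨a, c, β, hβ, rfl⟩ := hS π hπS
        obtain ⟨rfl, rfl⟩ := graphLine_le_graphPlane_iff.1 hℓπ
        exact mem_image.2 ⟨β, mem_range.2 hβ, by congr 1 <;> ring⟩
    _ ≤ b := card_image_le.trans (card_range b).le

theorem exists_mul_pow_four_le_lt {b N : ℕ} (hb : 0 < b) (hN : b ^ 4 ≤ N) :
    ∃ d, 0 < d ∧ (b * d) ^ 4 ≤ N ∧ N < 16 * (b * d) ^ 4 := by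
  set n := Nat.nthRoot 4 N
  have hbn : b ≤ n := (Nat.le_nthRoot_iff (by norm_num)).2 hN
  refine ⟨n / b, Nat.div_pos hbn hb, ?_, ?_⟩
  · exact (Nat.pow_le_pow_left (Nat.mul_div_le n b) 4).trans (Nat.pow_nthRoot_le (.inl (by norm_num)))
  · have hsucc : n + 1 ≤ 2 * (b * (n / b)) := by
      have := Nat.div_add_mod n b
      have := Nat.mod_lt n hb
      have := Nat.mul_le_mul_left b (Nat.div_pos hbn hb)
      omega
    calc N < (n + 1) ^ 4 := Nat.lt_pow_nthRoot_add_one (by norm_num) N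
      _ ≤ (2 * (b * (n / b))) ^ 4 := Nat.pow_le_pow_left hsucc 4
      _ = 16 * (b * (n / b)) ^ 4 := by ring

def gridPoint (q : ℕ × ℕ × ℕ) : Fin 3 → ℝ := ![q.1, q.2.1, q.2.2]

def gridLine (q : ℕ × ℕ × ℕ × ℕ) : AffineSubspace ℝ (Fin 3 → ℝ) :=
  graphLine q.1 q.2.1 q.2.2.1 q.2.2.2

def gridPlane (q : ℕ × ℕ × ℕ) : AffineSubspace ℝ (Fin 3 → ℝ) :=
  graphPlane q.1 q.2.1 q.2.2

section Construction

variable (b d : ℕ)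

def configPoints : Finset (Fin 3 → ℝ) :=
  (range b ×ˢ range (2 * (b * d)) ×ˢ range (4 * b * (b * d))).image gridPoint

def configLines : Finset (AffineSubspace ℝ (Fin 3 → ℝ)) :=
  (range d ×ˢ range (2 * (b * d)) ×ˢ range (b * d) ×ˢ range (2 * b * (b * d))).image gridLine

def configPlanes : Finset (AffineSubspace ℝ (Fin 3 → ℝ)) :=
  (range (b * d) ×ˢ range b ×ˢ range (b * (b * d))).image gridPlane

def configFlagIndex : Finset (ℕ × ℕ × ℕ × ℕ × ℕ × ℕ) :=
  range b ×ˢ range d ×ˢ range (b * d) ×ˢ range (b * d) ×ˢ range b ×ˢ range (b * (b * d))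

def configFlag :
    ℕ × ℕ × ℕ × ℕ × ℕ × ℕ → (Fin 3 → ℝ) × AffineSubspace ℝ (Fin 3 → ℝ) × AffineSubspace ℝ (Fin 3 → ℝ)
  | (x, s, y, a, β, c) =>
    (gridPoint (x, y + s * x, c + β * y + (a + β * s) * x),
      gridLine (s, a + β * s, y, c + β * y), gridPlane (a, β, c))

variable {b d}

theorem card_configPoints_le (hd : 0 < d) : (configPoints b d).card ≤ 8 * (b * d) ^ 4 := by
  refine card_image_le.trans ?_
  simp only [card_product, card_range]
  calc b * (2 * (b * d) * (4 * b * (b * d))) = 8 * b ^ 4 * d ^ 2 := by ring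
    _ ≤ 8 * b ^ 4 * d ^ 4 := Nat.mul_le_mul_left _ (Nat.pow_le_pow_right hd (by norm_num))
    _ = 8 * (b * d) ^ 4 := by ring

theorem card_configLines_le : (configLines b d).card ≤ 4 * (b * d) ^ 4 := by
  refine card_image_le.trans (le_of_eq ?_)
  simp only [card_product, card_range]
  ring

theorem card_configPlanes_le (hd : 0 < d) : (configPlanes b d).card ≤ (b * d) ^ 4 := by
  refine card_image_le.trans ?_
  simp only [card_product, card_range]
  calc b * d * (b * (b * (b * d))) = b ^ 4 * d ^ 2 := by ring
    _ ≤ b ^ 4 * d ^ 4 := Nat.mul_le_mul_left _ (Nat.pow_le_pow_right hd (by norm_num))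
    _ = (b * d) ^ 4 := by ring

theorem isLine_of_mem_configLines {ℓ} (hℓ : ℓ ∈ configLines b d) : IsLine ℓ := by
  obtain ⟨q, -, rfl⟩ := mem_image.1 hℓ
  exact isLine_graphLine

theorem isPlane_of_mem_configPlanes {π} (hπ : π ∈ configPlanes b d) : IsPlane π := by
  obtain ⟨q, -, rfl⟩ := mem_image.1 hπ
  exact isPlane_graphPlane

theorem card_filter_configPoints_mem_le {ℓ} (hℓ : ℓ ∈ configLines b d) :
    ((configPoints b d).filter (· ∈ ℓ)).card ≤ b := by
  obtain ⟨q, -, rfl⟩ := mem_image.1 hℓ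
  refine card_filter_mem_graphLine_le (fun p hp => ?_) _ _ _ _
  obtain ⟨⟨x, u, v⟩, hq, rfl⟩ := mem_image.1 hp
  exact ⟨x, mem_range.1 (mem_product.1 hq).1, rfl⟩

theorem card_filter_le_configPlanes_le {ℓ} (hℓ : ℓ ∈ configLines b d) :
    ((configPlanes b d).filter (ℓ ≤ ·)).card ≤ b := by
  obtain ⟨q, -, rfl⟩ := mem_image.1 hℓ
  refine card_filter_graphLine_le_le (fun π hπ => ?_) _ _ _ _
  obtain ⟨⟨a, β, c⟩, hq, rfl⟩ := mem_image.1 hπ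
  exact ⟨a, c, β, mem_range.1 (mem_product.1 (mem_product.1 hq).2).1, rfl⟩

theorem configFlag_injOn : Set.InjOn configFlag (configFlagIndex b d) := by
  rintro ⟨x, s, y, a, β, c⟩ - ⟨x', s', y', a', β', c'⟩ - h
  simp only [configFlag, Prod.mk.injEq, gridPoint, gridLine, gridPlane, graphLine_inj,
    graphPlane_inj, Nat.cast_inj, Matrix.vecCons_inj] at h
  obtain ⟨⟨rfl, -⟩, ⟨rfl, -, rfl, -⟩, rfl, rfl, rfl⟩ := h
  rfl

theorem configFlag_mem (i) (hi : i ∈ configFlagIndex b d) : 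
    (configFlag i).1 ∈ configPoints b d ∧ (configFlag i).2.1 ∈ configLines b d ∧
      (configFlag i).2.2 ∈ configPlanes b d ∧ (configFlag i).1 ∈ (configFlag i).2.1 ∧
      (configFlag i).2.1 ≤ (configFlag i).2.2 := by
  obtain ⟨x, s, y, a, β, c⟩ := i
  simp only [configFlagIndex, mem_product, mem_range] at hi
  obtain ⟨hx, hs, hy, ha, hβ, hc⟩ := hi
  refine ⟨mem_image_of_mem _ ?_, mem_image_of_mem _ ?_, mem_image_of_mem _ ?_, ?_, ?_⟩
  · have hsx : s * x < d * b := Nat.mul_lt_mul'' hs hx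
    have hβs : β * s < b * d := Nat.mul_lt_mul'' hβ hs
    have hβy : β * y < b * (b * d) := Nat.mul_lt_mul'' hβ hy
    have hax : (a + β * s) * x < 2 * (b * d) * b := Nat.mul_lt_mul'' (by omega) hx
    simp only [mem_product, mem_range]
    refine ⟨hx, ?_, ?_⟩ <;> nlinarith
  · have hβs : β * s < b * d := Nat.mul_lt_mul'' hβ hs
    have hβy : β * y < b * (b * d) := Nat.mul_lt_mul'' hβ hy
    simp only [mem_product, mem_range]
    exact ⟨hs, by omega, hy, by nlinarith⟩
  · simp only [mem_product, mem_range]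
    exact ⟨ha, hβ, hc⟩
  · refine mem_graphLine.2 ⟨x, ?_⟩
    ext i; fin_cases i <;> simp [configFlag, gridPoint]
  · exact graphLine_le_graphPlane_iff.2 ⟨by push_cast; ring, by push_cast; ring⟩

theorem le_flags3_config : b ^ 2 * (b * d) ^ 4 ≤
    flags3 (configPoints b d) (configLines b d) (configPlanes b d) := by
  calc b ^ 2 * (b * d) ^ 4 = (configFlagIndex b d).card := by
        simp only [configFlagIndex, card_product, card_range]; ring
    _ ≤ _ := card_le_flags3 _ _ configFlag_injOn configFlag_mem

end Construction

/-- For all sufficiently large `b`, `N` with `b⁴ ≤ N` there are `O(N)` points, lines, and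
planes such that each line contains at most `b` points and lies on at most `b` planes,
with at least `c·N·b²` flags. -/
theorem flags_lower_bound_Nb_sq :
    ∃ c C : ℝ, 0 < c ∧ 0 < C ∧
      ∃ M : ℕ, ∀ b N : ℕ, M ≤ b → M ≤ N → b ^ 4 ≤ N →
        ∃ (P : Finset (Fin 3 → ℝ)) (L S : Finset (AffineSubspace ℝ (Fin 3 → ℝ))),
          (P.card : ℝ) ≤ C * N ∧ (L.card : ℝ) ≤ C * N ∧ (S.card : ℝ) ≤ C * N ∧
          (∀ ℓ ∈ L, IsLine ℓ) ∧ (∀ π ∈ S, IsPlane π) ∧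
          (∀ ℓ ∈ L, (P.filter (fun p => p ∈ ℓ)).card ≤ b ∧
            (S.filter (fun π => ℓ ≤ π)).card ≤ b) ∧
          c * ((N : ℝ) * (b : ℝ) ^ 2) ≤ (flags3 P L S : ℝ) := by
  refine ⟨1 / 16, 8, by norm_num, by norm_num, 1, fun b N hb _ hN => ?_⟩
  obtain ⟨d, hd, hdN, hNd⟩ := exists_mul_pow_four_le_lt hb hN
  have hCN {k : ℕ} (hk : k ≤ 8 * (b * d) ^ 4) : (k : ℝ) ≤ 8 * N := by
    exact_mod_cast hk.trans (by omega)
  refine ⟨configPoints b d, configLines b d, configPlanes b d,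
    hCN (card_configPoints_le hd), hCN (card_configLines_le.trans (by omega)),
    hCN ((card_configPlanes_le hd).trans (by omega)),
    fun _ => isLine_of_mem_configLines, fun _ => isPlane_of_mem_configPlanes,
    fun _ hℓ => ⟨card_filter_configPoints_mem_le hℓ, card_filter_le_configPlanes_le hℓ⟩, ?_⟩
  have hflags : N * b ^ 2 ≤ 16 * flags3 (configPoints b d) (configLines b d) (configPlanes b d) :=
    calc N * b ^ 2 ≤ 16 * (b ^ 2 * (b * d) ^ 4) := by nlinarith
      _ ≤ _ := Nat.mul_le_mul_left 16 le_flags3_config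
  have : ((N * b ^ 2 : ℕ) : ℝ) ≤ (16 * flags3 _ _ _ : ℕ) := Nat.cast_le.2 hflags
  push_cast at this
  linarith
end
end
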